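/- With the spherical ensemble kernel K_N on S² and C_N^2 = ∫_{S²} |K_N(x,y)|² d(x,y)² dσ(x), one has lim_{N→∞} C_N^2 = 4. -/

import Mathlib

/-!
For `r ≥ 0`, `sin y ≤ y ≤ tan y` at `y = arctan r` gives `r² / (1 + r²) ≤ arctan² r ≤ r²`, so
`C_N^2` lies between `8 N² ∫₀^∞ r³ (1 + r²)^{-(N+2)} dr` and `8 N² ∫₀^∞ r³ (1 + r²)^{-(N+1)} dr`.
Writing `r³ = r (1 + r²) - r` reduces these to `∫₀^∞ r (1 + r²)^{-n} dr = 1 / (2 (n - 1))`, whence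
`∫₀^∞ r³ (1 + r²)^{-n} dr = 1 / (2 (n - 2) (n - 1))` and both bounds tend to `4`.
-/

open MeasureTheory Real Filter Set Topology

namespace Real

lemma arctan_le_self {x : ℝ} (hx : 0 ≤ x) : arctan x ≤ x := by
  simpa [tan_arctan] using le_tan (arctan_nonneg.2 hx) (arctan_lt_pi_div_two x)

lemma sq_div_one_add_sq_le_arctan_sq {x : ℝ} (hx : 0 ≤ x) : x ^ 2 / (1 + x ^ 2) ≤ arctan x ^ 2 := by
  have h := sin_le (arctan_nonneg.2 hx)
  rw [sin_arctan] at h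
  have h2 := pow_le_pow_left₀ (by positivity) h 2
  rwa [div_pow, sq_sqrt (by positivity)] at h2

end Real

lemma hasDerivAt_inv_one_add_sq_pow (m : ℕ) (r : ℝ) :
    HasDerivAt (fun r : ℝ => -((1 + r ^ 2) ^ (m + 1))⁻¹ / (2 * ((m : ℝ) + 1)))
      (r / (1 + r ^ 2) ^ (m + 2)) r := by
  have hpos : (0 : ℝ) < 1 + r ^ 2 := by positivity
  have h := ((((hasDerivAt_pow 2 r).const_add 1).pow (m + 1)).inv
    (pow_ne_zero _ hpos.ne')).neg.div_const (2 * ((m : ℝ) + 1))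
  refine h.congr_deriv ?_
  have hm : (m : ℝ) + 1 ≠ 0 := by positivity
  simp only [Pi.pow_apply, Nat.add_sub_cancel]
  push_cast
  field_simp
  ring

lemma tendsto_inv_one_add_sq_pow_atTop (m : ℕ) :
    Tendsto (fun r : ℝ => -((1 + r ^ 2) ^ (m + 1))⁻¹ / (2 * ((m : ℝ) + 1))) atTop (𝓝 0) := by
  have h : Tendsto (fun r : ℝ => (1 + r ^ 2) ^ (m + 1)) atTop atTop :=
    (tendsto_pow_atTop (Nat.succ_ne_zero m)).comp
      (tendsto_atTop_add_const_left _ 1 (tendsto_pow_atTop two_ne_zero))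
  simpa using (h.inv_tendsto_atTop.neg).div_const (2 * ((m : ℝ) + 1))

lemma integrableOn_Ioi_div_one_add_sq_pow {n : ℕ} (hn : 2 ≤ n) :
    IntegrableOn (fun r : ℝ => r / (1 + r ^ 2) ^ n) (Ioi 0) := by
  obtain ⟨m, rfl⟩ := Nat.exists_eq_add_of_le' hn
  exact integrableOn_Ioi_deriv_of_nonneg' (fun r _ => hasDerivAt_inv_one_add_sq_pow m r)
    (fun r hr => div_nonneg (le_of_lt hr) (by positivity)) (tendsto_inv_one_add_sq_pow_atTop m)

lemma integral_Ioi_div_one_add_sq_pow {n : ℕ} (hn : 2 ≤ n) :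
    ∫ r in Ioi (0 : ℝ), r / (1 + r ^ 2) ^ n = 1 / (2 * ((n : ℝ) - 1)) := by
  obtain ⟨m, rfl⟩ := Nat.exists_eq_add_of_le' hn
  rw [integral_Ioi_of_hasDerivAt_of_nonneg' (fun r _ => hasDerivAt_inv_one_add_sq_pow m r)
    (fun r hr => div_nonneg (le_of_lt hr) (by positivity)) (tendsto_inv_one_add_sq_pow_atTop m)]
  rw [show ((m + 2 : ℕ) : ℝ) - 1 = m + 1 by push_cast; ring]
  simp only [one_pow, add_zero, zero_pow two_ne_zero, inv_one, zero_sub]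
  ring

lemma cube_div_one_add_sq_pow_succ (r : ℝ) (n : ℕ) :
    r ^ 3 / (1 + r ^ 2) ^ (n + 1) = r / (1 + r ^ 2) ^ n - r / (1 + r ^ 2) ^ (n + 1) := by
  have : (0 : ℝ) < 1 + r ^ 2 := by positivity
  field_simp
  ring

lemma integrableOn_Ioi_cube_div_one_add_sq_pow {n : ℕ} (hn : 3 ≤ n) :
    IntegrableOn (fun r : ℝ => r ^ 3 / (1 + r ^ 2) ^ n) (Ioi 0) := by
  obtain ⟨m, rfl⟩ := Nat.exists_eq_add_of_le' (by omega : 1 ≤ n)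
  simp only [cube_div_one_add_sq_pow_succ]
  exact (integrableOn_Ioi_div_one_add_sq_pow (by omega)).sub
    (integrableOn_Ioi_div_one_add_sq_pow (by omega))

lemma integral_Ioi_cube_div_one_add_sq_pow {n : ℕ} (hn : 3 ≤ n) :
    ∫ r in Ioi (0 : ℝ), r ^ 3 / (1 + r ^ 2) ^ n = 1 / (2 * ((n : ℝ) - 2) * ((n : ℝ) - 1)) := by
  obtain ⟨m, rfl⟩ := Nat.exists_eq_add_of_le' (by omega : 1 ≤ n)
  have hm : (3 : ℝ) ≤ m + 1 := by exact_mod_cast hn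
  simp only [cube_div_one_add_sq_pow_succ]
  rw [integral_sub (integrableOn_Ioi_div_one_add_sq_pow (by omega))
      (integrableOn_Ioi_div_one_add_sq_pow (by omega)),
    integral_Ioi_div_one_add_sq_pow (by omega), integral_Ioi_div_one_add_sq_pow (by omega)]
  have h1 : (m : ℝ) - 1 ≠ 0 := by linarith
  have h2 : (m : ℝ) ≠ 0 := by linarith
  have h3 : (m : ℝ) + 1 - 2 ≠ 0 := by linarith
  have h4 : (m : ℝ) + 1 - 1 ≠ 0 := by linarith
  push_cast
  field_simp
  ring

lemma tendsto_sq_mul_integral_Ioi_cube_div (c : ℕ) :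
    Tendsto (fun N : ℕ => (N : ℝ) ^ 2 * ∫ r in Ioi (0 : ℝ), r ^ 3 / (1 + r ^ 2) ^ (N + c))
      atTop (𝓝 (1 / 2)) := by
  have h := ((tendsto_natCast_div_add_atTop ((c : ℝ) - 2)).mul
    (tendsto_natCast_div_add_atTop ((c : ℝ) - 1))).const_mul (1 / 2)
  rw [mul_one, mul_one] at h
  refine h.congr' ?_
  filter_upwards [eventually_ge_atTop 3] with N hN
  have hN : (3 : ℝ) ≤ N := by exact_mod_cast hN
  have hc : (0 : ℝ) ≤ c := c.cast_nonneg
  rw [integral_Ioi_cube_div_one_add_sq_pow (by omega)]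
  have h1 : (N : ℝ) + ((c : ℝ) - 2) ≠ 0 := by linarith
  have h2 : (N : ℝ) + ((c : ℝ) - 1) ≠ 0 := by linarith
  have h3 : (N : ℝ) + c - 2 ≠ 0 := by linarith
  have h4 : (N : ℝ) + c - 1 ≠ 0 := by linarith
  push_cast
  field_simp
  ring

section ArctanWeight

variable (n : ℕ) {r : ℝ}

lemma arctan_weight_le (hr : 0 ≤ r) :
    r * (2 * arctan r) ^ 2 / (1 + r ^ 2) ^ n ≤ 4 * (r ^ 3 / (1 + r ^ 2) ^ n) := by
  have h := pow_le_pow_left₀ (arctan_nonneg.2 hr) (arctan_le_self hr) 2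
  rw [mul_div_assoc', div_le_div_iff_of_pos_right (by positivity)]
  nlinarith [mul_le_mul_of_nonneg_left h hr]

lemma le_arctan_weight (hr : 0 ≤ r) :
    4 * (r ^ 3 / (1 + r ^ 2) ^ (n + 1)) ≤ r * (2 * arctan r) ^ 2 / (1 + r ^ 2) ^ n := by
  have h := mul_le_mul_of_nonneg_left (sq_div_one_add_sq_le_arctan_sq hr) (by positivity : 0 ≤ 4 * r)
  calc 4 * (r ^ 3 / (1 + r ^ 2) ^ (n + 1)) = 4 * r * (r ^ 2 / (1 + r ^ 2)) / (1 + r ^ 2) ^ n := by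
        rw [pow_succ]; field_simp; ring
    _ ≤ 4 * r * arctan r ^ 2 / (1 + r ^ 2) ^ n := by gcongr
    _ = r * (2 * arctan r) ^ 2 / (1 + r ^ 2) ^ n := by ring

variable {n}

lemma integrableOn_Ioi_arctan_weight
    (h : IntegrableOn (fun r : ℝ => r ^ 3 / (1 + r ^ 2) ^ n) (Ioi 0)) :
    IntegrableOn (fun r : ℝ => r * (2 * arctan r) ^ 2 / (1 + r ^ 2) ^ n) (Ioi 0) := by
  refine (h.const_mul 4).mono'
    (Continuous.div (by fun_prop) (by fun_prop) fun r => by positivity).aestronglyMeasurable ?_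
  filter_upwards [ae_restrict_mem measurableSet_Ioi] with r hr
  rw [norm_of_nonneg (by have : (0 : ℝ) ≤ r := le_of_lt hr; positivity)]
  exact arctan_weight_le n (le_of_lt hr)

lemma integral_Ioi_arctan_weight_le
    (h : IntegrableOn (fun r : ℝ => r ^ 3 / (1 + r ^ 2) ^ n) (Ioi 0)) :
    ∫ r in Ioi (0 : ℝ), r * (2 * arctan r) ^ 2 / (1 + r ^ 2) ^ n
      ≤ 4 * ∫ r in Ioi (0 : ℝ), r ^ 3 / (1 + r ^ 2) ^ n := by
  rw [← integral_const_mul]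
  exact setIntegral_mono_on (integrableOn_Ioi_arctan_weight h) (h.const_mul 4) measurableSet_Ioi
    fun r hr => arctan_weight_le n (le_of_lt hr)

lemma le_integral_Ioi_arctan_weight
    (h : IntegrableOn (fun r : ℝ => r ^ 3 / (1 + r ^ 2) ^ n) (Ioi 0))
    (h' : IntegrableOn (fun r : ℝ => r ^ 3 / (1 + r ^ 2) ^ (n + 1)) (Ioi 0)) :
    4 * ∫ r in Ioi (0 : ℝ), r ^ 3 / (1 + r ^ 2) ^ (n + 1)
      ≤ ∫ r in Ioi (0 : ℝ), r * (2 * arctan r) ^ 2 / (1 + r ^ 2) ^ n := by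
  rw [← integral_const_mul]
  exact setIntegral_mono_on (h'.const_mul 4) (integrableOn_Ioi_arctan_weight h) measurableSet_Ioi
    fun r hr => le_arctan_weight n (le_of_lt hr)

end ArctanWeight

/-- For the spherical ensemble on `S²`,
`C_N^2 = 2N² ∫₀^∞ r (2 arctan r)²(1+r²)^{−(N+1)} dr` satisfies
`lim_{N→∞} C_N^2 = 4`. -/
theorem spherical_ensemble_CN2 :
    Tendsto (fun N : ℕ =>
        2 * (N : ℝ) ^ 2 *
          ∫ r in Set.Ioi (0 : ℝ), r * (2 * Real.arctan r) ^ 2 / (1 + r ^ 2) ^ (N + 1))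
      atTop (nhds 4) := by
  have lower := (tendsto_sq_mul_integral_Ioi_cube_div 2).const_mul 8
  have upper := (tendsto_sq_mul_integral_Ioi_cube_div 1).const_mul 8
  norm_num at lower upper
  have hpos (N : ℕ) : (0 : ℝ) ≤ 2 * (N : ℝ) ^ 2 := by positivity
  refine tendsto_of_tendsto_of_tendsto_of_le_of_le' lower upper ?_ ?_ <;>
    filter_upwards [eventually_ge_atTop 2] with N hN
  · have h := le_integral_Ioi_arctan_weight (integrableOn_Ioi_cube_div_one_add_sq_pow (n := N + 1)
      (by omega)) (integrableOn_Ioi_cube_div_one_add_sq_pow (by omega))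
    linarith [mul_le_mul_of_nonneg_left h (hpos N)]
  · have h := integral_Ioi_arctan_weight_le (integrableOn_Ioi_cube_div_one_add_sq_pow (n := N + 1)
      (by omega))
    linarith [mul_le_mul_of_nonneg_left h (hpos N)]
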